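/- Let d ∈ ℕ with d ≥ 2, κ ∈ ℝ \ {0}, and Λ ∈ ℝ. Let a_1, …, a_d : ℝ → ℝ be twice differentiable with a_l(t) > 0 for all t, let φ be differentiable, and let ρ, p : ℝ → ℝ and V : ℝ → ℝ satisfy the conformal Bianchi I Einstein equations (I_0), (I_1), …, (I_d) for all t ∈ ℝ. Let ν ∈ ℝ \ {0}, set R = (a_1⋯a_d)^ν, let θ > 0 and q ∈ ℝ \ {0}, and let τ satisfy τ'(t) = θ R(t)^{q+1/ν} for all t with differentiable inverse f (f(τ(t)) = t). Then there exist constants μ_2, …, μ_d ∈ ℝ and ω_2, …, ω_d > 0 such that a_i(t) = ω_i e^{μ_i t} a_1(t) for all t and all 2 ≤ i ≤ d; and for any such constants, setting L = (2/(d−1)) Σ_{2≤l<k≤d} μ_l μ_k − Σ_{j=2}^d μ_j², Y(s) = R(f(s))^q, φ̃ = φ∘f, Q(s) = (qνdκ/(d−1)) φ̃'(s)², ρ̃ = ρ∘f, and p̃ = p∘f, for every t ∈ ℝ, at s = τ(t) the function Y is twice differentiable and satisfies Y''(s) + Q(s)Y(s) = qνL/(θ² Y(s)^{(qν+2)/(qν)})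 − qνdκ(ρ̃(s) + p̃(s))/(θ²(d−1) Y(s)). -/

import Mathlib

/-!
Subtracting two of the equations (I_i) gives H_i' = H_j', so every H_i - H_1 is a constant μ_i,
i.e. a_i = ω_i e^{μ_i t} a_1. Summing the (I_i) and subtracting d·(I_0) eliminates V and Λ and
leaves, for h = Σ H_l = (log A)' with A = a_1⋯a_d, the Raychaudhuri-type equation
  (d - 1)(h' - h²) + dκ(φ'² + A²(ρ + p)) = 2 Σ_{2≤l<k} μ_l μ_k - (d - 1) Σ_{j≥2} μ_j²;
its right side appears because d Σ H_l² - (Σ H_l)² does not change when every H_l is shifted by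
H_1. With m = qν we have Y(τ t) = A(t)^m and τ' = θ A^{m+1}, so differentiating twice in the new
time s = τ(t) gives Y''(τ t) = m (h' - h²) / (θ² A^{m+2}), and the equation above turns into the
Ermakov–Milne–Pinney type equation for Y.
-/

open Finset Filter Topology Real Function

section SumIdentities

variable {ι R : Type*} [Fintype ι]

theorem Finset.sum_filter_ne_eq_sum_sub [DecidableEq ι] [AddCommGroup R] (y : ι → R) (i : ι) :
    ∑ l ∈ univ.filter (fun l => l ≠ i), y l = ∑ l, y l - y i := by
  rw [filter_ne', sum_erase_eq_sub (mem_univ i)]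

variable [CommRing R]

theorem Finset.sq_sum_eq_sum_sq_add_two_mul_sum_lt [LinearOrder ι] (x : ι → R) :
    (∑ i, x i) ^ 2 = ∑ i, x i ^ 2
      + 2 * ∑ pr ∈ univ.filter (fun pr : ι × ι => pr.1 < pr.2), x pr.1 * x pr.2 := by
  have hswap : ∑ pr ∈ univ.filter (fun pr : ι × ι => pr.2 < pr.1), x pr.1 * x pr.2
      = ∑ pr ∈ univ.filter (fun pr : ι × ι => pr.1 < pr.2), x pr.1 * x pr.2 :=
    sum_nbij' Prod.swap Prod.swap (by simp) (by simp) (by simp) (by simp) (by simp [mul_comm])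
  have hdiag : ∑ pr ∈ univ.filter (fun pr : ι × ι => pr.1 = pr.2), x pr.1 * x pr.2
      = ∑ i, x i ^ 2 :=
    sum_nbij' Prod.fst (fun i => (i, i)) (by simp) (by simp) (by simp +contextual [Prod.ext_iff])
      (by simp) (by simp +contextual [sq])
  have hsplit : ∑ pr : ι × ι, x pr.1 * x pr.2
      = ∑ pr ∈ univ.filter (fun pr : ι × ι => pr.1 < pr.2), x pr.1 * x pr.2
        + ∑ pr ∈ univ.filter (fun pr : ι × ι => pr.2 < pr.1), x pr.1 * x pr.2
        + ∑ pr ∈ univ.filter (fun pr : ι × ι => pr.1 = pr.2), x pr.1 * x pr.2 := by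
    rw [sum_filter, sum_filter, sum_filter, ← sum_add_distrib, ← sum_add_distrib]
    refine sum_congr rfl fun pr _ => ?_
    rcases lt_trichotomy pr.1 pr.2 with h | h | h
    · simp [h, h.ne, h.not_gt]
    · simp [h]
    · simp [h, h.ne', h.not_gt]
  rw [sq, sum_mul_sum, ← Fintype.sum_prod_type', hsplit, hswap, hdiag]
  ring

theorem Finset.card_mul_sum_sq_sub_sq_sum_sub_const (x : ι → R) (c : R) :
    Fintype.card ι * ∑ i, (x i - c) ^ 2 - (∑ i, (x i - c)) ^ 2
      = Fintype.card ι * ∑ i, x i ^ 2 - (∑ i, x i) ^ 2 := by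
  simp only [sub_sq, sum_add_distrib, sum_sub_distrib, sum_const, card_univ, nsmul_eq_mul,
    ← sum_mul, ← mul_sum]
  ring

end SumIdentities

theorem bianchiI_raychaudhuri {ι : Type*} [Fintype ι] [LinearOrder ι] (H H' : ι → ℝ) (i₀ : ι)
    (κ Λ φ' A V ρ p : ℝ)
    (hI0 : ∑ pr ∈ univ.filter (fun pr : ι × ι => pr.1 < pr.2), H pr.1 * H pr.2
      = κ * (φ' ^ 2 / 2 + A ^ 2 * (V + ρ + Λ / κ)))
    (hIi : ∀ i, ∑ l ∈ univ.filter (fun l => l ≠ i), H' l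
        - ∑ pr ∈ univ.filter (fun pr : ι × ι => pr.1 < pr.2), H pr.1 * H pr.2
      = κ * (-φ' ^ 2 / 2 + A ^ 2 * (V - p + Λ / κ))) :
    (Fintype.card ι - 1) * (∑ l, H' l - (∑ l, H l) ^ 2)
        + Fintype.card ι * κ * (φ' ^ 2 + A ^ 2 * (ρ + p))
      = 2 * ∑ pr ∈ univ.filter (fun pr : ι × ι => pr.1 < pr.2),
            (H pr.1 - H i₀) * (H pr.2 - H i₀)
        - (Fintype.card ι - 1) * ∑ l, (H l - H i₀) ^ 2 := by
  have htrace := congrArg (fun y : ι → ℝ => ∑ i, y i) (funext hIi)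
  simp only [sum_filter_ne_eq_sum_sub, sum_sub_distrib, sum_const, card_univ, nsmul_eq_mul]
    at htrace
  linear_combination htrace - Fintype.card ι * hI0
    - Fintype.card ι * sq_sum_eq_sum_sq_add_two_mul_sum_lt H
    + sq_sum_eq_sum_sq_add_two_mul_sum_lt (fun l => H l - H i₀)
    + card_mul_sum_sq_sub_sq_sum_sub_const H (H i₀)

section ShiftByFirst

variable {d : ℕ} {x μ : Fin d → ℝ} {i₀ : Fin d}

theorem Fin.sum_sub_sq_eq_sum_filter_val_ne_zero (hi₀ : i₀.val = 0)
    (hμ : ∀ l : Fin d, l.val ≠ 0 → x l - x i₀ = μ l) :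
    ∑ l, (x l - x i₀) ^ 2 = ∑ l ∈ univ.filter (fun l : Fin d => l.val ≠ 0), μ l ^ 2 := by
  rw [sum_filter]
  refine sum_congr rfl fun l _ => ?_
  split_ifs with hl
  · rw [hμ l hl]
  · simp [show l = i₀ from Fin.ext (by omega)]

theorem Fin.sum_lt_sub_mul_sub_eq_sum_filter_val_ne_zero (hi₀ : i₀.val = 0)
    (hμ : ∀ l : Fin d, l.val ≠ 0 → x l - x i₀ = μ l) :
    ∑ pr ∈ univ.filter (fun pr : Fin d × Fin d => pr.1 < pr.2), (x pr.1 - x i₀) * (x pr.2 - x i₀)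
      = ∑ pr ∈ univ.filter (fun pr : Fin d × Fin d => pr.1.val ≠ 0 ∧ pr.1 < pr.2),
          μ pr.1 * μ pr.2 := by
  rw [sum_filter, sum_filter]
  refine sum_congr rfl fun pr _ => ?_
  by_cases h1 : pr.1.val = 0
  · simp [hi₀, show pr.1 = i₀ from Fin.ext (by omega)]
  · by_cases h12 : pr.1 < pr.2
    · have h2 : pr.2.val ≠ 0 := by have := Fin.lt_def.1 h12; omega
      simp [h1, h12, hμ _ h1, hμ _ h2]
    · simp [h12]

end ShiftByFirst

theorem logDeriv_const_mul_exp_mul {b : ℝ → ℝ} {t : ℝ} (ω μ : ℝ) (hω : ω ≠ 0)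
    (hb : DifferentiableAt ℝ b t) (hbt : b t ≠ 0) :
    logDeriv (fun u => ω * exp (μ * u) * b u) t = μ + logDeriv b t := by
  simp_rw [mul_assoc]
  rw [logDeriv_const_mul t ω hω,
    logDeriv_mul (f := fun u => exp (μ * u)) t (exp_ne_zero _) hbt (by fun_prop) hb,
    logDeriv_apply, (((hasDerivAt_id' t).const_mul μ).exp).deriv]
  simp [exp_ne_zero]

theorem exists_eq_mul_exp_mul_of_deriv_logDeriv_eq {a b : ℝ → ℝ} (ha : Differentiable ℝ a)
    (hb : Differentiable ℝ b) (ha0 : ∀ t, 0 < a t) (hb0 : ∀ t, 0 < b t)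
    (hda : Differentiable ℝ (logDeriv a)) (hdb : Differentiable ℝ (logDeriv b))
    (h : ∀ t, deriv (logDeriv a) t = deriv (logDeriv b) t) :
    ∃ μ ω, 0 < ω ∧ ∀ t, a t = ω * exp (μ * t) * b t := by
  set μ := logDeriv a 0 - logDeriv b 0
  have hμ : ∀ t, logDeriv a t = μ + logDeriv b t := fun t => by
    have := is_const_of_deriv_eq_zero (hda.sub hdb)
      (fun u => by rw [deriv_sub (hda u) (hdb u), h, sub_self]) t 0
    simp only [Pi.sub_apply] at this
    linarith
  have heq : Set.EqOn (logDeriv a) (logDeriv fun u => 1 * exp (μ * u) * b u) Set.univ :=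
    fun t _ => by rw [logDeriv_const_mul_exp_mul 1 μ one_ne_zero (hb t) (hb0 t).ne', hμ]
  obtain ⟨ω, -, hω⟩ := (logDeriv_eqOn_iff ha.differentiableOn (by fun_prop) isOpen_univ
    isPreconnected_univ (fun t _ => by have := hb0 t; positivity) (fun t _ => (ha0 t).ne')).1 heq
  have hωa : ∀ t, a t = ω * exp (μ * t) * b t := fun t => by
    simpa [mul_assoc] using hω (Set.mem_univ t)
  refine ⟨μ, ω, ?_, hωa⟩
  have h0 := hωa 0
  rw [mul_zero, exp_zero, mul_one] at h0
  exact pos_of_mul_pos_left (h0 ▸ ha0 0) (hb0 0).le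

theorem exists_eq_mul_exp_mul_of_sum_ne_deriv_logDeriv_eq {ι : Type*} [Fintype ι]
    [DecidableEq ι] {a : ι → ℝ → ℝ} (ha : ∀ l, Differentiable ℝ (a l))
    (ha' : ∀ l, Differentiable ℝ (deriv (a l))) (ha0 : ∀ l t, 0 < a l t) (c : ℝ → ℝ)
    (h : ∀ i t, ∑ l ∈ univ.filter (fun l => l ≠ i), deriv (logDeriv (a l)) t = c t) (i₀ : ι) :
    ∃ μ ω : ι → ℝ, (∀ i, 0 < ω i) ∧ ∀ i t, a i t = ω i * exp (μ i * t) * a i₀ t := by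
  have hda : ∀ l, Differentiable ℝ (logDeriv (a l)) := fun l =>
    (ha' l).div (ha l) fun t => (ha0 l t).ne'
  have hderiv : ∀ i t, deriv (logDeriv (a i)) t = deriv (logDeriv (a i₀)) t := fun i t => by
    have := (h i t).trans (h i₀ t).symm
    rw [sum_filter_ne_eq_sum_sub, sum_filter_ne_eq_sum_sub] at this
    linarith
  choose μ ω hω hμω using fun i => exists_eq_mul_exp_mul_of_deriv_logDeriv_eq (ha i) (ha i₀)
    (ha0 i) (ha0 i₀) (hda i) (hda i₀) (hderiv i)
  exact ⟨μ, ω, hω, hμω⟩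

theorem hasDerivAt_finset_prod_mul_sum_logDeriv {𝕜 ι : Type*} [NontriviallyNormedField 𝕜]
    (s : Finset ι) {a : ι → 𝕜 → 𝕜} {u : 𝕜} (ha : ∀ i ∈ s, DifferentiableAt 𝕜 (a i) u)
    (ha0 : ∀ i ∈ s, a i u ≠ 0) :
    HasDerivAt (fun u => ∏ i ∈ s, a i u) ((∏ i ∈ s, a i u) * ∑ i ∈ s, logDeriv (a i) u) u := by
  rw [← logDeriv_prod ha0 ha, logDeriv_apply, mul_div_cancel₀ _ (prod_ne_zero_iff.2 ha0)]
  exact (DifferentiableAt.fun_finsetProd ha).hasDerivAt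

theorem range_mem_nhds_of_deriv_pos {τ : ℝ → ℝ} (hτ : ∀ u, 0 < deriv τ u) (t : ℝ) :
    Set.range τ ∈ 𝓝 (τ t) := by
  have hmono := strictMono_of_deriv_pos hτ
  have hcont : Continuous τ := continuous_iff_continuousAt.2 fun u =>
    (differentiableAt_of_deriv_ne_zero (hτ u).ne').continuousAt
  refine mem_of_superset (Ioo_mem_nhds (hmono (sub_one_lt t)) (hmono (lt_add_one t))) ?_
  exact (intermediate_value_Ioo (by linarith) hcont.continuousOn).trans
    (Set.image_subset_range _ _)

theorem hasDerivAt_comp_of_leftInverse {τ f g : ℝ → ℝ} {τ' g' t : ℝ} (hτ : HasDerivAt τ τ' t)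
    (hf : DifferentiableAt ℝ f (τ t)) (hfτ : LeftInverse f τ) (hg : HasDerivAt g g' t) :
    HasDerivAt (g ∘ f) (g' / τ') (τ t) := by
  have hf' : deriv f (τ t) * τ' = 1 := by
    have := hf.hasDerivAt.comp t hτ
    rw [hfτ.comp_eq_id] at this
    exact this.unique (hasDerivAt_id t)
  rw [← hfτ t] at hg
  refine (hg.comp (τ t) hf.hasDerivAt).congr_deriv ?_
  rw [eq_one_div_of_mul_eq_one_left hf', mul_one_div]

theorem hasDerivAt_deriv_comp_of_leftInverse {τ f F : ℝ → ℝ} {G' t : ℝ}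
    (hτ : ∀ u, 0 < deriv τ u) (hf : Differentiable ℝ f) (hfτ : LeftInverse f τ)
    (hF : Differentiable ℝ F) (hG : HasDerivAt (fun u => deriv F u / deriv τ u) G' t) :
    HasDerivAt (deriv (F ∘ f)) (G' / deriv τ t) (τ t) := by
  have hτd : ∀ u, HasDerivAt τ (deriv τ u) u := fun u =>
    (differentiableAt_of_deriv_ne_zero (hτ u).ne').hasDerivAt
  -- `f` is only known to invert `τ` on `range τ`, which is a neighbourhood of `τ t`.
  have hderiv : deriv (F ∘ f) =ᶠ[𝓝 (τ t)] (fun u => deriv F u / deriv τ u) ∘ f := by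
    filter_upwards [range_mem_nhds_of_deriv_pos hτ t] with s ⟨u, hu⟩
    rw [← hu, (hasDerivAt_comp_of_leftInverse (hτd u) (hf _) hfτ (hF u).hasDerivAt).deriv]
    simp [hfτ u]
  exact (hasDerivAt_comp_of_leftInverse (hτd t) (hf _) hfτ hG).congr_of_eventuallyEq hderiv

theorem hasDerivAt_deriv_rpow_comp_of_leftInverse {A h τ f : ℝ → ℝ} {m θ h' t : ℝ}
    (hA0 : ∀ u, 0 < A u) (hA : ∀ u, HasDerivAt A (A u * h u) u) (hh : HasDerivAt h h' t)
    (hθ : 0 < θ) (hτ : ∀ u, deriv τ u = θ * A u ^ (m + 1)) (hf : Differentiable ℝ f)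
    (hfτ : LeftInverse f τ) :
    HasDerivAt (deriv ((fun u => A u ^ m) ∘ f)) (m * (h' - h t ^ 2) / (θ ^ 2 * A t ^ (m + 2)))
      (τ t) := by
  have hτpos : ∀ u, 0 < deriv τ u := fun u => by rw [hτ]; have := hA0 u; positivity
  have hF : ∀ u, HasDerivAt (fun u => A u ^ m) (A u * h u * m * A u ^ (m - 1)) u := fun u =>
    (hA u).rpow_const (Or.inl (hA0 u).ne')
  have hG : (fun u => deriv (fun u => A u ^ m) u / deriv τ u) = fun u => m / θ * h u / A u := by
    funext u
    have := hA0 u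
    rw [(hF u).deriv, hτ, rpow_sub_one this.ne', rpow_add_one this.ne']
    field_simp
  have hG' := (hh.const_mul (m / θ)).fun_div (hA t) (hA0 t).ne'
  rw [← hG] at hG'
  convert hasDerivAt_deriv_comp_of_leftInverse hτpos hf hfτ (fun u => (hF u).differentiableAt)
    hG' using 1
  have := hA0 t
  rw [hτ, show m + 2 = m + 1 + 1 by ring, rpow_add_one this.ne']
  field_simp

theorem emp_equation_of_raychaudhuri {A h τ f φ Y : ℝ → ℝ} {m θ h' t c L X : ℝ}
    (hA0 : ∀ u, 0 < A u) (hA : ∀ u, HasDerivAt A (A u * h u) u) (hh : HasDerivAt h h' t)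
    (hθ : 0 < θ) (hm : m ≠ 0) (hτ : ∀ u, deriv τ u = θ * A u ^ (m + 1))
    (hf : Differentiable ℝ f) (hfτ : LeftInverse f τ) (hφ : DifferentiableAt ℝ φ t)
    (hY : Y = (fun u => A u ^ m) ∘ f)
    (hray : h' - h t ^ 2 + c * (deriv φ t ^ 2 + A t ^ 2 * X) = L) :
    DifferentiableAt ℝ Y (τ t) ∧ DifferentiableAt ℝ (deriv Y) (τ t) ∧
      deriv (deriv Y) (τ t) + m * c * deriv (φ ∘ f) (τ t) ^ 2 * Y (τ t)
        = m * L / (θ ^ 2 * Y (τ t) ^ ((m + 2) / m)) - m * c * X / (θ ^ 2 * Y (τ t)) := by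
  have hAt := hA0 t
  have hY2 := hasDerivAt_deriv_rpow_comp_of_leftInverse hA0 hA hh hθ hτ hf hfτ (t := t)
  rw [← hY] at hY2
  have hτt : HasDerivAt τ (θ * A t ^ (m + 1)) t := by
    rw [← hτ t]
    exact (differentiableAt_of_deriv_ne_zero (by rw [hτ t]; positivity)).hasDerivAt
  have hφ' := hasDerivAt_comp_of_leftInverse hτt (hf _) hfτ hφ.hasDerivAt
  have hYt : Y (τ t) = A t ^ m := by rw [hY, comp_apply, hfτ]
  refine ⟨hY ▸ ((hA _).differentiableAt.rpow_const (Or.inl (hA0 _).ne')).comp _ (hf _),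
    hY2.differentiableAt, ?_⟩
  rw [hY2.deriv, hφ'.deriv, hYt, ← rpow_mul hAt.le, mul_div_cancel₀ _ hm, rpow_add hAt,
    rpow_add hAt, rpow_one, rpow_two]
  field_simp
  linear_combination hray

/-- conformal Bianchi I Einstein equations imply a generalized EMP equation. -/
theorem stmt_15
    (d : ℕ) (hd : 2 ≤ d) (κ Λ : ℝ)
    (a : Fin d → ℝ → ℝ) (φ ρ p V : ℝ → ℝ)
    (ha : ∀ l, Differentiable ℝ (a l)) (ha' : ∀ l, Differentiable ℝ (deriv (a l)))
    (hapos : ∀ l t, 0 < a l t)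
    (hφ : Differentiable ℝ φ)
    (H : Fin d → ℝ → ℝ) (hH : ∀ l t, H l t = deriv (a l) t / a l t)
    (hI0 : ∀ t, (∑ pr ∈ Finset.univ.filter (fun pr : Fin d × Fin d => pr.1 < pr.2),
          H pr.1 t * H pr.2 t)
        = κ * ((deriv φ t) ^ 2 / 2 + (∏ l, a l t) ^ 2 * (V (φ t) + ρ t + Λ / κ)))
    (hIi : ∀ i : Fin d, ∀ t,
        (∑ l ∈ Finset.univ.filter (fun l => l ≠ i), deriv (H l) t)
          - (∑ pr ∈ Finset.univ.filter (fun pr : Fin d × Fin d => pr.1 < pr.2),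
              H pr.1 t * H pr.2 t)
        = κ * (-(deriv φ t) ^ 2 / 2 + (∏ l, a l t) ^ 2 * (V (φ t) - p t + Λ / κ)))
    (ν : ℝ) (hν : ν ≠ 0)
    (R : ℝ → ℝ) (hR : ∀ t, R t = (∏ l, a l t) ^ ν)
    (θ q : ℝ) (hθ : 0 < θ) (hq : q ≠ 0)
    (τ f : ℝ → ℝ)
    (hτ : ∀ t, deriv τ t = θ * R t ^ (q + 1 / ν))
    (hf : Differentiable ℝ f) (hfτ : ∀ t, f (τ t) = t)
    (Y φt Q : ℝ → ℝ)
    (hY : ∀ s, Y s = R (f s) ^ q)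
    (hφt : ∀ s, φt s = φ (f s))
    (hQ : ∀ s, Q s = (q * ν * (d : ℝ) * κ / ((d : ℝ) - 1)) * (deriv φt s) ^ 2) :
    (∃ μ ω : Fin d → ℝ, (∀ i : Fin d, i.val ≠ 0 → 0 < ω i) ∧
      ∀ i : Fin d, i.val ≠ 0 → ∀ t,
        a i t = ω i * Real.exp (μ i * t) * a ⟨0, by omega⟩ t) ∧
    ∀ μ ω : Fin d → ℝ, (∀ i : Fin d, i.val ≠ 0 → 0 < ω i) →
      (∀ i : Fin d, i.val ≠ 0 → ∀ t,
        a i t = ω i * Real.exp (μ i * t) * a ⟨0, by omega⟩ t) →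
      ∀ t, DifferentiableAt ℝ Y (τ t) ∧ DifferentiableAt ℝ (deriv Y) (τ t) ∧
        deriv (deriv Y) (τ t) + Q (τ t) * Y (τ t)
          = q * ν * ((2 / ((d : ℝ) - 1)) *
                (∑ pr ∈ Finset.univ.filter
                    (fun pr : Fin d × Fin d => pr.1.val ≠ 0 ∧ pr.1 < pr.2),
                  μ pr.1 * μ pr.2)
              - (∑ j ∈ Finset.univ.filter (fun j : Fin d => j.val ≠ 0), μ j ^ 2))
              / (θ ^ 2 * Y (τ t) ^ ((q * ν + 2) / (q * ν)))
            - q * ν * (d : ℝ) * κ * (ρ (f (τ t)) + p (f (τ t)))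
              / (θ ^ 2 * ((d : ℝ) - 1) * Y (τ t)) := by
  have hz : 0 < d := by omega
  obtain rfl : H = fun l => logDeriv (a l) := funext fun l => funext (hH l)
  beta_reduce at hI0 hIi
  refine ⟨?_, fun μ ω hω hrel t => ?_⟩
  · obtain ⟨μ, ω, hω, hμω⟩ := exists_eq_mul_exp_mul_of_sum_ne_deriv_logDeriv_eq ha ha' hapos _
      (fun i t => eq_add_of_sub_eq (hIi i t)) ⟨0, hz⟩
    exact ⟨μ, ω, fun i _ => hω i, fun i _ => hμω i⟩
  set A : ℝ → ℝ := fun u => ∏ l, a l u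
  have hA0 : ∀ u, 0 < A u := fun u => prod_pos fun l _ => hapos l u
  have hA : ∀ u, HasDerivAt A (A u * ∑ l, logDeriv (a l) u) u := fun u =>
    hasDerivAt_finset_prod_mul_sum_logDeriv univ (fun l _ => ha l u) fun l _ => (hapos l u).ne'
  have hh : HasDerivAt (fun u => ∑ l, logDeriv (a l) u) (∑ l, deriv (logDeriv (a l)) t) t :=
    HasDerivAt.fun_sum fun l _ => ((ha' l).div (ha l) fun u => (hapos l u).ne') t |>.hasDerivAt
  have hτA : ∀ u, deriv τ u = θ * A u ^ (q * ν + 1) := fun u => by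
    rw [hτ, hR, ← rpow_mul (hA0 u).le, mul_add, mul_one_div_cancel hν, mul_comm ν q]
  have hYA : Y = (fun u => A u ^ (q * ν)) ∘ f := funext fun s => by
    rw [hY, hR, ← rpow_mul (hA0 _).le, mul_comm ν q, comp_apply]
  have hμ : ∀ l : Fin d, l.val ≠ 0 → logDeriv (a l) t - logDeriv (a ⟨0, hz⟩) t = μ l := by
    intro l hl
    rw [show a l = fun u => ω l * exp (μ l * u) * a ⟨0, hz⟩ u from funext (hrel l hl),
      logDeriv_const_mul_exp_mul _ _ (hω l hl).ne' (ha _ t) (hapos _ t).ne', add_sub_cancel_right]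
  set M := ∑ pr ∈ univ.filter (fun pr : Fin d × Fin d => pr.1.val ≠ 0 ∧ pr.1 < pr.2),
    μ pr.1 * μ pr.2
  set P := ∑ j ∈ univ.filter (fun j : Fin d => j.val ≠ 0), μ j ^ 2
  have hray := bianchiI_raychaudhuri (fun l => logDeriv (a l) t)
    (fun l => deriv (logDeriv (a l)) t) ⟨0, hz⟩ κ Λ _ (A t) _ _ _ (hI0 t) (hIi · t)
  rw [Fin.sum_sub_sq_eq_sum_filter_val_ne_zero rfl hμ,
    Fin.sum_lt_sub_mul_sub_eq_sum_filter_val_ne_zero rfl hμ, Fintype.card_fin] at hray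
  have hd1 : (d : ℝ) - 1 ≠ 0 := sub_ne_zero.2 (by exact_mod_cast (by omega : d ≠ 1))
  obtain ⟨hY1, hY2, hEMP⟩ := emp_equation_of_raychaudhuri hA0 hA hh hθ (mul_ne_zero hq hν) hτA
    hf hfτ (hφ t) hYA (c := d * κ / (d - 1)) (L := 2 / (d - 1) * M - P) (X := ρ t + p t)
    (by field_simp; linear_combination hray)
  refine ⟨hY1, hY2, ?_⟩
  convert hEMP using 2
  · rw [hQ, show φt = φ ∘ f from funext hφt]
    ring
  · rw [hfτ t]
    field_simp
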